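/- Let X be a locally super-compact stratified L-topological space. Then for every x ∈ X, in the L-dcpo pt_L𝒪(X) of points, the L-subset ⇓[x] is directed and ⊔⇓[x] = [x], where [x](A) = A(x). -/

import Mathlib

open scoped Classical

namespace FuzzyPaper

variable {L : Type*} [Order.Frame L]

/-- The inclusion L-order on L-subsets: sub(A,B) = ⨅ x, A x ⇨ B x. -/
def subF {X : Type*} (A B : X → L) : L := ⨅ x, A x ⇨ B x

/-- `e` is an L-order: reflexivity, transitivity, antisymmetry. -/
def IsLOrder {P : Type*} (e : P → P → L) : Prop :=
  (∀ x, e x x = ⊤) ∧ (∀ x y z, e x y ⊓ e y z ≤ e x z) ∧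
  (∀ x y, e x y ⊓ e y x = ⊤ → x = y)

/-- `D` is a directed L-subset of `(P, e)`. -/
def IsDirectedL {P : Type*} (e : P → P → L) (D : P → L) : Prop :=
  (⨆ x, D x) = ⊤ ∧ ∀ x y, D x ⊓ D y ≤ ⨆ z, D z ⊓ e x z ⊓ e y z

/-- `x` is a supremum of the L-subset `A`: e(x,y) = sub(A, ↓y) for all y. -/
def IsSupOf {P : Type*} (e : P → P → L) (A : P → L) (x : P) : Prop :=
  ∀ y, e x y = ⨅ z, A z ⇨ e z y

/-- The fuzzy way-below L-subset ⇓x :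
⇓x(y) = ⨅_{D directed with a supremum s} (e(x,s) ⇨ ⨆ d, D d ⊓ e(y,d)). -/
def dwb {P : Type*} (e : P → P → L) (x : P) : P → L := fun y =>
  ⨅ Ds : {Ds : (P → L) × P // IsDirectedL e Ds.1 ∧ IsSupOf e Ds.1 Ds.2},
    e x Ds.1.2 ⇨ ⨆ d, Ds.1.1 d ⊓ e y d

/-- A continuous L-ordered set: ⇓x is directed with supremum x, for each x. -/
def IsContinuousLOrder {P : Type*} (e : P → P → L) : Prop :=
  IsLOrder e ∧ ∀ x, IsDirectedL e (dwb e x) ∧ IsSupOf e (dwb e x) x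

/-- An L-dcpo: every directed L-subset has a supremum. -/
def IsLDcpo {P : Type*} (e : P → P → L) : Prop :=
  IsLOrder e ∧ ∀ D, IsDirectedL e D → ∃ x, IsSupOf e D x

/-- A continuous L-dcpo. -/
def IsContinuousLDcpo {P : Type*} (e : P → P → L) : Prop :=
  IsLDcpo e ∧ ∀ x, IsDirectedL e (dwb e x) ∧ IsSupOf e (dwb e x) x

/-- Scott open L-subsets: upper sets inaccessible by directed suprema. -/
def IsScottOpen {P : Type*} (e : P → P → L) (A : P → L) : Prop :=
  (∀ x y, A x ⊓ e x y ≤ A y) ∧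
  ∀ D s, IsDirectedL e D → IsSupOf e D s → A s = ⨆ x, A x ⊓ D x

/-- The Scott L-topology. -/
def scottOpens {P : Type*} (e : P → P → L) : Set (P → L) := {A | IsScottOpen e A}

/-- `𝒪` is a (stratified) L-topology on X. -/
def IsLTop {X : Type*} (𝒪 : Set (X → L)) : Prop :=
  (∀ A ∈ 𝒪, ∀ B ∈ 𝒪, A ⊓ B ∈ 𝒪) ∧ (∀ S ⊆ 𝒪, sSup S ∈ 𝒪) ∧
  (∀ a : L, (fun _ => a) ∈ 𝒪)

/-- T₀ separation. -/
def IsT0 {X : Type*} (𝒪 : Set (X → L)) : Prop :=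
  ∀ x y : X, (∀ A ∈ 𝒪, A x = A y) → x = y

/-- The specialization L-order of an L-topological space. -/
def specE {X : Type*} (𝒪 : Set (X → L)) : X → X → L := fun x y =>
  ⨅ A : 𝒪, (A : X → L) x ⇨ (A : X → L) y

/-- A point of 𝒪(X): preserves binary meets, arbitrary joins and constants. -/
def IsPoint {X : Type*} (𝒪 : Set (X → L)) (p : 𝒪 → L) : Prop :=
  (∀ A B C : 𝒪, (C : X → L) = (A : X → L) ⊓ (B : X → L) → p C = p A ⊓ p B) ∧
  (∀ (S : Set 𝒪) (C : 𝒪), (C : X → L) = sSup (Subtype.val '' S) →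
    p C = ⨆ A ∈ S, p A) ∧
  (∀ (a : L) (C : 𝒪), (C : X → L) = (fun _ => a) → p C = a)

/-- The inclusion L-order on maps 𝒪 → L (in particular on points). -/
def subPt {X : Type*} (𝒪 : Set (X → L)) (p q : 𝒪 → L) : L := ⨅ A, p A ⇨ q A

/-- η : x ↦ [x], where [x](A) = A(x). -/
def etaPt {X : Type*} (𝒪 : Set (X → L)) (x : X) : 𝒪 → L := fun A => (A : X → L) x

/-- L-sobriety: η is a bijection onto the set of points. -/
def IsSober {X : Type*} (𝒪 : Set (X → L)) : Prop :=
  (∀ x y : X, etaPt 𝒪 x = etaPt 𝒪 y → x = y) ∧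
  (∀ p : 𝒪 → L, IsPoint 𝒪 p → ∃ x, p = etaPt 𝒪 x)

/-- Super-compact L-subsets. -/
def IsSuperCompact {X : Type*} (𝒪 : Set (X → L)) (A : X → L) : Prop :=
  (⨆ x, A x) = ⊤ ∧ ∀ S ⊆ 𝒪, subF A (sSup S) = ⨆ V ∈ S, subF A V

/-- Interior operator. -/
def interiorF {X : Type*} (𝒪 : Set (X → L)) (A : X → L) : X → L :=
  sSup {B ∈ 𝒪 | B ≤ A}

/-- Locally super-compact L-topological spaces. -/
def IsLocallySC {X : Type*} (𝒪 : Set (X → L)) : Prop :=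
  ∀ A ∈ 𝒪, A = fun x => ⨆ B ∈ {B | IsSuperCompact 𝒪 B}, subF B A ⊓ interiorF 𝒪 B x

/-- `ℬ` is a base of the L-topology `𝒪`. -/
def IsBase {X : Type*} (𝒪 : Set (X → L)) (ℬ : Set (X → L)) : Prop :=
  ℬ ⊆ 𝒪 ∧ ∀ A ∈ 𝒪, A = fun x => ⨆ B ∈ ℬ, subF B A ⊓ B x

/-- Strong locally super-compact: a base of super-compact open sets. -/
def IsStrongLocallySC {X : Type*} (𝒪 : Set (X → L)) : Prop :=
  ∃ ℬ, IsBase 𝒪 ℬ ∧ ∀ B ∈ ℬ, IsSuperCompact 𝒪 B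

/-- Continuity of maps of L-topological spaces. -/
def LCont {X Y : Type*} (𝒪X : Set (X → L)) (𝒪Y : Set (Y → L)) (f : X → Y) : Prop :=
  ∀ B ∈ 𝒪Y, (B ∘ f) ∈ 𝒪X

/-- k(x)(y) = e(y,x) if y is compact (⇓y(y) = ⊤), and ⊥ otherwise. -/
noncomputable def kfun {P : Type*} (e : P → P → L) (x : P) : P → L := fun y =>
  if dwb e y y = ⊤ then e y x else ⊥

/-- Algebraic L-dcpo. -/
def IsAlgebraicLDcpo {P : Type*} (e : P → P → L) : Prop :=
  IsLDcpo e ∧ ∀ x, IsDirectedL e (kfun e x) ∧ IsSupOf e (kfun e x) x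

/-- Quasihomeomorphism: f^← : 𝒪Y → 𝒪X is a bijection. -/
def IsQuasiHomeo {X Y : Type*} (𝒪X : Set (X → L)) (𝒪Y : Set (Y → L)) (f : X → Y) : Prop :=
  LCont 𝒪X 𝒪Y f ∧ (∀ A ∈ 𝒪X, ∃ B ∈ 𝒪Y, B ∘ f = A) ∧
  (∀ B₁ ∈ 𝒪Y, ∀ B₂ ∈ 𝒪Y, B₁ ∘ f = B₂ ∘ f → B₁ = B₂)

/-- Subspace embedding of L-topological spaces. -/
def IsEmbeddingL {X Y : Type*} (𝒪X : Set (X → L)) (𝒪Y : Set (Y → L)) (f : X → Y) : Prop :=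
  Function.Injective f ∧ 𝒪X = {A | ∃ B ∈ 𝒪Y, B ∘ f = A}

/-- Strict embedding: a quasihomeomorphism which is a subspace embedding. -/
def IsStrictEmbedding {X Y : Type*} (𝒪X : Set (X → L)) (𝒪Y : Set (Y → L)) (f : X → Y) : Prop :=
  IsEmbeddingL 𝒪X 𝒪Y f ∧ IsQuasiHomeo 𝒪X 𝒪Y f

/-- L-sobrification: universal L-sober space over X. -/
def IsSobrification {X Y : Type*} (𝒪X : Set (X → L)) (𝒪Y : Set (Y → L)) (j : X → Y) : Prop :=
  IsLTop 𝒪Y ∧ IsSober 𝒪Y ∧ LCont 𝒪X 𝒪Y j ∧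
  ∀ (Z : Type*) (𝒪Z : Set (Z → L)), IsLTop 𝒪Z → IsSober 𝒪Z →
    ∀ f : X → Z, LCont 𝒪X 𝒪Z f →
      ∃! g : Y → Z, LCont 𝒪Y 𝒪Z g ∧ f = g ∘ j


/-! For a super-compact `B`, `A ↦ sub(B, A)` is a point `p_B`, and `B°(x) ≤ ⇓[x](p_B)`: directed
suprema of points are computed pointwise, so if `[x] ≤ ⊔D` then `B°(x) ≤ ⨆ z, D(z) ⊓ z(B°)`, while
`z(B°) ≤ sub(p_B, z)`. Local super-compactness says that the L-subset `p_B ↦ B°(x)` is directed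
with supremum `[x]`. In any L-ordered set, an element that is the supremum of a directed L-subset
lying below its way-below L-subset is also the supremum of the way-below L-subset, which is then
directed. -/

section LOrdered

variable {P : Type*} {e : P → P → L}

lemma dwb_le_iSup_inf {D : P → L} {x : P} (hxx : e x x = ⊤) (hD : IsDirectedL e D)
    (hx : IsSupOf e D x) (y : P) : dwb e x y ≤ ⨆ d, D d ⊓ e y d := by
  refine (iInf_le _ ⟨⟨D, x⟩, hD, hx⟩).trans ?_
  simp only [hxx, top_himp, le_rfl]

lemma isDirectedL_lowerClosure (hrefl : ∀ p, e p p = ⊤) (x : P) :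
    IsDirectedL e (fun z => e z x) :=
  ⟨top_unique ((hrefl x).ge.trans (le_iSup (fun z => e z x) x)),
    fun p q => le_iSup_of_le x (by simp only [hrefl, top_inf_eq, le_rfl])⟩

lemma isSupOf_lowerClosure (hrefl : ∀ p, e p p = ⊤)
    (htrans : ∀ p q r, e p q ⊓ e q r ≤ e p r) (x : P) : IsSupOf e (fun z => e z x) x :=
  fun y => le_antisymm
    (le_iInf fun z => le_himp_iff.mpr ((inf_comm _ _).trans_le (htrans z x y)))
    ((iInf_le _ x).trans (by simp only [hrefl, top_himp, le_rfl]))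

lemma dwb_le (hrefl : ∀ p, e p p = ⊤) (htrans : ∀ p q r, e p q ⊓ e q r ≤ e p r)
    (x y : P) : dwb e x y ≤ e y x :=
  (dwb_le_iSup_inf (hrefl x) (isDirectedL_lowerClosure hrefl x)
    (isSupOf_lowerClosure hrefl htrans x) y).trans
    (iSup_le fun d => (inf_comm _ _).trans_le (htrans y d x))

theorem isDirectedL_dwb_of_le (hrefl : ∀ p, e p p = ⊤)
    (htrans : ∀ p q r, e p q ⊓ e q r ≤ e p r) {D : P → L} {x : P} (hD : IsDirectedL e D)
    (hx : IsSupOf e D x) (hDx : D ≤ dwb e x) : IsDirectedL e (dwb e x) := by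
  refine ⟨top_unique (hD.1.ge.trans (iSup_mono hDx)), fun p q => ?_⟩
  refine (inf_le_inf (dwb_le_iSup_inf (hrefl x) hD hx p)
    (dwb_le_iSup_inf (hrefl x) hD hx q)).trans ?_
  rw [iSup_inf_eq]
  refine iSup_le fun d => ?_
  rw [inf_iSup_eq]
  refine iSup_le fun d' => ?_
  calc D d ⊓ e p d ⊓ (D d' ⊓ e q d') = (D d ⊓ D d') ⊓ (e p d ⊓ e q d') := by ac_rfl
    _ ≤ (⨆ u, D u ⊓ e d u ⊓ e d' u) ⊓ (e p d ⊓ e q d') := inf_le_inf_right _ (hD.2 d d')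
    _ = ⨆ u, D u ⊓ e d u ⊓ e d' u ⊓ (e p d ⊓ e q d') := iSup_inf_eq _ _
    _ ≤ ⨆ u, dwb e x u ⊓ e p u ⊓ e q u := iSup_mono fun u =>
      calc D u ⊓ e d u ⊓ e d' u ⊓ (e p d ⊓ e q d')
          = D u ⊓ (e p d ⊓ e d u) ⊓ (e q d' ⊓ e d' u) := by ac_rfl
        _ ≤ dwb e x u ⊓ e p u ⊓ e q u :=
          inf_le_inf (inf_le_inf (hDx u) (htrans p d u)) (htrans q d' u)

theorem isSupOf_dwb_of_le (hrefl : ∀ p, e p p = ⊤) (htrans : ∀ p q r, e p q ⊓ e q r ≤ e p r)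
    {D : P → L} {x : P} (hx : IsSupOf e D x) (hDx : D ≤ dwb e x) :
    IsSupOf e (dwb e x) x := fun y =>
  le_antisymm
    (le_iInf fun z => le_himp_iff.mpr <| (inf_le_inf_left _ (dwb_le hrefl htrans x z)).trans
      ((inf_comm _ _).trans_le (htrans z x y)))
    ((iInf_mono fun z => himp_le_himp_right (hDx z)).trans (hx y).ge)

variable {ι : Type*} (b : ι → P) (w : ι → L)

def imageL : P → L := fun p => ⨆ i, ⨆ _ : b i = p, w i

lemma le_imageL (i : ι) : w i ≤ imageL b w (b i) :=
  le_iSup_of_le i (le_iSup_of_le rfl le_rfl)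

lemma iInf_imageL_himp (f : P → L) : ⨅ p, imageL b w p ⇨ f p = ⨅ i, w i ⇨ f (b i) := by
  simp only [imageL, iSup_himp_eq]
  rw [iInf_comm]
  simp only [iInf_iInf_eq_right]

lemma imageL_le_iff {D : P → L} : imageL b w ≤ D ↔ ∀ i, w i ≤ D (b i) := by
  simp only [Pi.le_def, imageL, iSup_le_iff]
  exact ⟨fun h i => h (b i) i rfl, fun h _ i hi => hi ▸ h i⟩

variable {b w}

lemma isDirectedL_imageL (htop : ⨆ i, w i = ⊤)
    (hdir : ∀ i j, w i ⊓ w j ≤ ⨆ k, w k ⊓ e (b i) (b k) ⊓ e (b j) (b k)) :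
    IsDirectedL e (imageL b w) := by
  refine ⟨top_unique (htop.ge.trans (iSup_mono' fun i => ⟨b i, le_imageL b w i⟩)), ?_⟩
  intro p q
  conv_lhs => simp only [imageL, iSup_inf_eq, inf_iSup_eq]
  simp only [iSup_le_iff]
  rintro j rfl i rfl
  refine (hdir i j).trans (iSup_le fun k => ?_)
  exact le_iSup_of_le (b k) (inf_le_inf_right _ (inf_le_inf_right _ (le_imageL b w k)))

end LOrdered

section Points

variable {X : Type*} {𝒪 : Set (X → L)}

lemma subF_self (A : X → L) : subF A A = ⊤ := by simp [subF]

lemma subF_inf_apply_le (A B : X → L) (y : X) : subF A B ⊓ A y ≤ B y :=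
  (inf_le_inf_right _ (iInf_le _ y)).trans himp_inf_le

lemma subF_trans (A B C : X → L) : subF A B ⊓ subF B C ≤ subF A C :=
  le_iInf fun y => (inf_le_inf (iInf_le _ y) (iInf_le _ y)).trans (himp_triangle _ _ _)

lemma subF_mono {A A' B B' : X → L} (hA : A' ≤ A) (hB : B ≤ B') : subF A B ≤ subF A' B' :=
  iInf_mono fun y => himp_le_himp (hA y) (hB y)

lemma interiorF_mem (hT : IsLTop 𝒪) (B : X → L) : interiorF 𝒪 B ∈ 𝒪 :=
  hT.2.1 _ fun _ h => h.1

lemma interiorF_le (B : X → L) : interiorF 𝒪 B ≤ B := sSup_le fun _ h => h.2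

lemma IsPoint.mono {p : 𝒪 → L} (hp : IsPoint 𝒪 p) {A B : 𝒪}
    (h : (A : X → L) ≤ B) : p A ≤ p B := by
  have hB : (B : X → L) = sSup (Subtype.val '' {A, B}) := by
    rw [Set.image_pair, sSup_pair, sup_eq_right.mpr h]
  rw [hp.2.1 {A, B} B hB]
  exact le_iSup₂_of_le A (by simp) le_rfl

lemma IsPoint.inf_subF_le (hT : IsLTop 𝒪) {p : 𝒪 → L} (hp : IsPoint 𝒪 p) (A B : 𝒪) :
    p A ⊓ subF (A : X → L) B ≤ p B := by
  -- `A` meets the constant open `sub(A, B)` inside `B`, and `p` sends this meet to the left side.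
  set c := subF (A : X → L) B
  have hc : (fun _ : X => c) ∈ 𝒪 := hT.2.2 c
  have hAc : (A : X → L) ⊓ (fun _ => c) ∈ 𝒪 := hT.1 _ A.2 _ hc
  calc p A ⊓ c = p ⟨_, hAc⟩ := by rw [hp.1 A ⟨_, hc⟩ ⟨_, hAc⟩ rfl, hp.2.2 c ⟨_, hc⟩ rfl]
    _ ≤ p B := hp.mono fun y => (inf_comm _ _).trans_le (subF_inf_apply_le _ _ y)

lemma isPoint_etaPt (x : X) : IsPoint 𝒪 (etaPt 𝒪 x) := by
  refine ⟨fun A B C h => ?_, fun S C h => ?_, fun a C h => ?_⟩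
  · simp only [etaPt, h, Pi.inf_apply]
  · simp only [etaPt, h, sSup_image, iSup_apply]
  · simp only [etaPt, h]

lemma IsSuperCompact.isPoint_subF {B : X → L} (hB : IsSuperCompact 𝒪 B) :
    IsPoint 𝒪 (fun A : 𝒪 => subF B A) := by
  refine ⟨fun A A' C h => ?_, fun S C h => ?_, fun a C h => ?_⟩
  · simp only [h, subF, Pi.inf_apply, himp_inf_distrib, iInf_inf_eq]
  · show subF B C = ⨆ A ∈ S, subF B A
    rw [h, hB.2 _ (by rintro _ ⟨A, -, rfl⟩; exact A.2)]
    simp only [iSup_image]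
  · simp only [h, subF, ← iSup_himp_eq, hB.1, top_himp]

end Points

section PointSpace

variable {X : Type*} {𝒪 : Set (X → L)}

variable (𝒪) in
abbrev Pt : Type _ := {p : 𝒪 → L // IsPoint 𝒪 p}

variable (𝒪) in
abbrev ptOrder (p q : Pt 𝒪) : L := subPt 𝒪 p.1 q.1

lemma ptOrder_self (p : Pt 𝒪) : ptOrder 𝒪 p p = ⊤ := subF_self p.1

lemma ptOrder_trans (p q r : Pt 𝒪) : ptOrder 𝒪 p q ⊓ ptOrder 𝒪 q r ≤ ptOrder 𝒪 p r :=
  subF_trans p.1 q.1 r.1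

lemma iSup_inf_apply_inf_le {D : Pt 𝒪 → L} (hD : IsDirectedL (ptOrder 𝒪) D) (A B : 𝒪) :
    (⨆ z, D z ⊓ z.1 A) ⊓ (⨆ z, D z ⊓ z.1 B) ≤ ⨆ u, D u ⊓ (u.1 A ⊓ u.1 B) := by
  rw [iSup_inf_eq]
  refine iSup_le fun z => ?_
  rw [inf_iSup_eq]
  refine iSup_le fun z' => ?_
  calc D z ⊓ z.1 A ⊓ (D z' ⊓ z'.1 B) = (D z ⊓ D z') ⊓ (z.1 A ⊓ z'.1 B) := by ac_rfl
    _ ≤ (⨆ u, D u ⊓ ptOrder 𝒪 z u ⊓ ptOrder 𝒪 z' u) ⊓ (z.1 A ⊓ z'.1 B) :=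
      inf_le_inf_right _ (hD.2 z z')
    _ = ⨆ u, D u ⊓ ptOrder 𝒪 z u ⊓ ptOrder 𝒪 z' u ⊓ (z.1 A ⊓ z'.1 B) := iSup_inf_eq _ _
    _ ≤ ⨆ u, D u ⊓ (u.1 A ⊓ u.1 B) := iSup_mono fun u =>
      calc D u ⊓ ptOrder 𝒪 z u ⊓ ptOrder 𝒪 z' u ⊓ (z.1 A ⊓ z'.1 B)
          = D u ⊓ ((ptOrder 𝒪 z u ⊓ z.1 A) ⊓ (ptOrder 𝒪 z' u ⊓ z'.1 B)) := by ac_rfl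
        _ ≤ D u ⊓ (u.1 A ⊓ u.1 B) :=
          inf_le_inf_left _ (inf_le_inf (subF_inf_apply_le _ _ A) (subF_inf_apply_le _ _ B))

lemma isPoint_iSup_inf {D : Pt 𝒪 → L} (hD : IsDirectedL (ptOrder 𝒪) D) :
    IsPoint 𝒪 (fun A => ⨆ z : Pt 𝒪, D z ⊓ z.1 A) := by
  refine ⟨fun A B C h => ?_, fun S C h => ?_, fun a C h => ?_⟩
  · simp only [fun z : Pt 𝒪 => z.2.1 A B C h]
    refine le_antisymm (iSup_le fun z => le_inf ?_ ?_) (iSup_inf_apply_inf_le hD A B)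
    · exact le_iSup_of_le z (inf_le_inf_left _ inf_le_left)
    · exact le_iSup_of_le z (inf_le_inf_left _ inf_le_right)
  · simp only [fun z : Pt 𝒪 => z.2.2.1 S C h, inf_iSup_eq]
    rw [iSup_comm]
    exact iSup_congr fun A => iSup_comm
  · simp only [fun z : Pt 𝒪 => z.2.2.2 a C h, ← iSup_inf_eq, hD.1, top_inf_eq]

lemma IsSupOf.apply_eq_iSup_inf {D : Pt 𝒪 → L} {s : Pt 𝒪} (hD : IsDirectedL (ptOrder 𝒪) D)
    (hs : IsSupOf (ptOrder 𝒪) D s) (A : 𝒪) : s.1 A = ⨆ z, D z ⊓ z.1 A := by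
  let t : Pt 𝒪 := ⟨fun A => ⨆ z, D z ⊓ z.1 A, isPoint_iSup_inf hD⟩
  have hst : ptOrder 𝒪 s t = ⊤ := by
    rw [hs t, iInf_eq_top]
    exact fun z => himp_eq_top_iff.mpr
      (le_iInf fun A => le_himp_iff.mpr (le_iSup_of_le z le_rfl))
  have hDs : ∀ z, D z ≤ ptOrder 𝒪 z s := by
    have := hs s
    rw [ptOrder_self, eq_comm, iInf_eq_top] at this
    exact fun z => himp_eq_top_iff.mp (this z)
  refine le_antisymm (himp_eq_top_iff.mp (iInf_eq_top.mp hst A)) (iSup_le fun z => ?_)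
  exact (inf_le_inf_right _ (hDs z)).trans (subF_inf_apply_le _ _ A)

end PointSpace

section SuperCompact

variable {X : Type*} {𝒪 : Set (X → L)}

variable (𝒪) in
abbrev SuperCompacts : Type _ := {B : X → L // IsSuperCompact 𝒪 B}

variable (𝒪) in
def superCompactPoint (B : SuperCompacts 𝒪) : Pt 𝒪 :=
  ⟨fun A => subF B.1 A, B.2.isPoint_subF⟩

lemma subF_le_ptOrder_superCompactPoint (B B' : SuperCompacts 𝒪) :
    subF B'.1 B.1 ≤ ptOrder 𝒪 (superCompactPoint 𝒪 B) (superCompactPoint 𝒪 B') :=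
  le_iInf fun A => le_himp_iff.mpr (subF_trans B'.1 B.1 A)

lemma apply_interiorF_le_ptOrder_superCompactPoint (hT : IsLTop 𝒪) (p : Pt 𝒪)
    (B : SuperCompacts 𝒪) :
    p.1 ⟨interiorF 𝒪 B.1, interiorF_mem hT B.1⟩ ≤ ptOrder 𝒪 (superCompactPoint 𝒪 B) p :=
  le_iInf fun A => le_himp_iff.mpr <|
    (inf_le_inf_left _ (subF_mono (interiorF_le B.1) le_rfl)).trans (p.2.inf_subF_le hT _ A)

lemma interiorF_apply_le_dwb (hT : IsLTop 𝒪) (x : X) (B : SuperCompacts 𝒪) :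
    interiorF 𝒪 B.1 x ≤ dwb (ptOrder 𝒪) ⟨etaPt 𝒪 x, isPoint_etaPt x⟩ (superCompactPoint 𝒪 B) := by
  refine le_iInf fun ⟨⟨D, s⟩, hD, hs⟩ => le_himp_iff.mpr ?_
  let iB : 𝒪 := ⟨interiorF 𝒪 B.1, interiorF_mem hT B.1⟩
  calc interiorF 𝒪 B.1 x ⊓ ptOrder 𝒪 ⟨etaPt 𝒪 x, isPoint_etaPt x⟩ s ≤ s.1 iB :=
        (inf_comm _ _).trans_le (subF_inf_apply_le _ _ iB)
    _ = ⨆ z, D z ⊓ z.1 iB := hs.apply_eq_iSup_inf hD iB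
    _ ≤ ⨆ z, D z ⊓ ptOrder 𝒪 (superCompactPoint 𝒪 B) z := iSup_mono fun z =>
        inf_le_inf_left _ (apply_interiorF_le_ptOrder_superCompactPoint hT z B)

lemma IsLocallySC.apply_eq (hl : IsLocallySC 𝒪) {A : X → L} (hA : A ∈ 𝒪) (x : X) :
    A x = ⨆ B : SuperCompacts 𝒪, subF B.1 A ⊓ interiorF 𝒪 B.1 x := by
  conv_lhs => rw [hl A hA]
  exact (iSup_subtype' (p := fun B => IsSuperCompact 𝒪 B)
    (f := fun B _ => subF B A ⊓ interiorF 𝒪 B x))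

lemma IsLocallySC.iSup_interiorF_apply (hT : IsLTop 𝒪) (hl : IsLocallySC 𝒪) (x : X) :
    ⨆ B : SuperCompacts 𝒪, interiorF 𝒪 B.1 x = ⊤ := by
  simpa only [subF, himp_top, iInf_top, top_inf_eq, eq_comm] using hl.apply_eq (hT.2.2 ⊤) x

lemma IsLocallySC.interiorF_inf_le (hT : IsLTop 𝒪) (hl : IsLocallySC 𝒪) (x : X)
    (B B' : SuperCompacts 𝒪) :
    interiorF 𝒪 B.1 x ⊓ interiorF 𝒪 B'.1 x ≤
      ⨆ C : SuperCompacts 𝒪, interiorF 𝒪 C.1 x ⊓ subF C.1 B.1 ⊓ subF C.1 B'.1 := by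
  rw [← Pi.inf_apply,
    hl.apply_eq (hT.1 _ (interiorF_mem hT B.1) _ (interiorF_mem hT B'.1)) x]
  refine iSup_mono fun C => ?_
  rw [inf_comm, inf_assoc]
  refine inf_le_inf_left _ (le_inf (subF_mono le_rfl ?_) (subF_mono le_rfl ?_))
  · exact inf_le_left.trans (interiorF_le B.1)
  · exact inf_le_right.trans (interiorF_le B'.1)

variable (𝒪) in
def superCompactApprox (x : X) : Pt 𝒪 → L :=
  imageL (superCompactPoint 𝒪) fun B => interiorF 𝒪 B.1 x

lemma isDirectedL_superCompactApprox (hT : IsLTop 𝒪) (hl : IsLocallySC 𝒪) (x : X) :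
    IsDirectedL (ptOrder 𝒪) (superCompactApprox 𝒪 x) := by
  refine isDirectedL_imageL (hl.iSup_interiorF_apply hT x) fun B B' => ?_
  refine (hl.interiorF_inf_le hT x B B').trans (iSup_mono fun C => ?_)
  exact inf_le_inf (inf_le_inf_left _ (subF_le_ptOrder_superCompactPoint B C))
    (subF_le_ptOrder_superCompactPoint B' C)

lemma isSupOf_superCompactApprox (hT : IsLTop 𝒪) (hl : IsLocallySC 𝒪) (x : X) :
    IsSupOf (ptOrder 𝒪) (superCompactApprox 𝒪 x) ⟨etaPt 𝒪 x, isPoint_etaPt x⟩ := by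
  intro q
  rw [superCompactApprox, iInf_imageL_himp]
  refine le_antisymm (le_iInf fun B => le_himp_iff.mpr ?_) (le_iInf fun A => le_himp_iff.mpr ?_)
  · exact (subF_inf_apply_le _ q.1 ⟨_, interiorF_mem hT B.1⟩).trans
      (apply_interiorF_le_ptOrder_superCompactPoint hT q B)
  · change _ ⊓ (A : X → L) x ≤ q.1 A
    rw [hl.apply_eq A.2 x, inf_iSup_eq]
    refine iSup_le fun B => ?_
    calc (⨅ C, interiorF 𝒪 C.1 x ⇨ ptOrder 𝒪 (superCompactPoint 𝒪 C) q) ⊓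
          (subF B.1 A ⊓ interiorF 𝒪 B.1 x)
        ≤ ((interiorF 𝒪 B.1 x ⇨ ptOrder 𝒪 (superCompactPoint 𝒪 B) q) ⊓ interiorF 𝒪 B.1 x) ⊓
          subF B.1 A := by
          rw [inf_comm (subF _ _), ← inf_assoc]
          exact inf_le_inf_right _ (inf_le_inf_right _ (iInf_le _ B))
      _ ≤ ptOrder 𝒪 (superCompactPoint 𝒪 B) q ⊓ (superCompactPoint 𝒪 B).1 A :=
          inf_le_inf_right _ himp_inf_le
      _ ≤ q.1 A := subF_inf_apply_le _ _ A

lemma superCompactApprox_le_dwb (hT : IsLTop 𝒪) (x : X) :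
    superCompactApprox 𝒪 x ≤ dwb (ptOrder 𝒪) ⟨etaPt 𝒪 x, isPoint_etaPt x⟩ :=
  (imageL_le_iff _ _).mpr (interiorF_apply_le_dwb hT x)

end SuperCompact

/-- In a locally super-compact space, ⇓[x] is directed with supremum [x] in pt_L𝒪(X). -/
theorem stmt13 {X : Type*} (𝒪 : Set (X → L)) (hT : IsLTop 𝒪) (hl : IsLocallySC 𝒪) (x : X) :
    ∃ hx : IsPoint 𝒪 (etaPt 𝒪 x),
      IsDirectedL (fun p q : {p : 𝒪 → L // IsPoint 𝒪 p} => subPt 𝒪 p.1 q.1)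
        (dwb (fun p q : {p : 𝒪 → L // IsPoint 𝒪 p} => subPt 𝒪 p.1 q.1) ⟨etaPt 𝒪 x, hx⟩) ∧
      IsSupOf (fun p q : {p : 𝒪 → L // IsPoint 𝒪 p} => subPt 𝒪 p.1 q.1)
        (dwb (fun p q : {p : 𝒪 → L // IsPoint 𝒪 p} => subPt 𝒪 p.1 q.1) ⟨etaPt 𝒪 x, hx⟩)
        ⟨etaPt 𝒪 x, hx⟩ := by
  refine ⟨isPoint_etaPt x, ?_, ?_⟩
  · exact isDirectedL_dwb_of_le ptOrder_self ptOrder_trans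
      (isDirectedL_superCompactApprox hT hl x) (isSupOf_superCompactApprox hT hl x)
      (superCompactApprox_le_dwb hT x)
  · exact isSupOf_dwb_of_le ptOrder_self ptOrder_trans
      (isSupOf_superCompactApprox hT hl x) (superCompactApprox_le_dwb hT x)

end FuzzyPaper
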